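/- Ratio recovery of embeddings (Corollary 3, part 3, constructive form): let h_1, …, h_t be pairwise distinct vectors in ℝ^d and let p_1, …, p_t > 0 satisfy Σ_k p_k = 1. For every index j ∈ {1, …, t}, as σ → 0⁺ the ratio [∫_{ℝ^d} S(θ) · conj(w_j(θ)) · e^{−σ‖θ‖²} dθ] / [∫_{ℝ^d} φ(θ) · conj(w̃_j(θ)) · e^{−σ‖θ‖²} dθ] (numerator a vector in ℂ^d integrated componentwise, denominator a nonzero scalar for σ sufficiently small) converges to h_j; in particular both the weight p_j and the embedding h_j are recoverable from the pair (S, φ). -/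
import Mathlib


open MeasureTheory Real Filter RealInnerProductSpace

lemma gaussInt {d : ℕ} {σ : ℝ} (hσ : 0 < σ) (w : EuclideanSpace ℝ (Fin d)) :
    ∫ θ : EuclideanSpace ℝ (Fin d),
      Complex.exp (-(σ:ℂ) * (‖θ‖:ℂ)^2 + Complex.I * ((⟪w, θ⟫ : ℝ) : ℂ)) =
    ((π:ℂ)/(σ:ℂ)) ^ ((d:ℂ)/2) * (Real.exp (-(‖w‖^2) / (4*σ)) : ℂ) := by
  have hb : 0 < ((σ:ℂ)).re := by simpa using hσ
  rw [GaussianFourier.integral_cexp_neg_mul_sq_norm_add (V := EuclideanSpace ℝ (Fin d)) hb Complex.I w]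
  rw [finrank_euclideanSpace_fin]
  congr 1
  rw [Complex.ofReal_exp]
  congr 1
  rw [Complex.I_sq]
  push_cast
  ring

lemma coreInt {d t : ℕ} (h : Fin t → EuclideanSpace ℝ (Fin d)) (j : Fin t)
    {σ : ℝ} (hσ : 0 < σ) (c : Fin t → ℂ) :
    ∫ θ : EuclideanSpace ℝ (Fin d),
      (∑ k, c k * Complex.exp (Complex.I * ((⟪θ, h k⟫ : ℝ) : ℂ))) *
        Complex.exp (-Complex.I * ((⟪θ, h j⟫ : ℝ) : ℂ)) * (Real.exp (-σ * ‖θ‖^2) : ℂ)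
    = ((π:ℂ)/(σ:ℂ)) ^ ((d:ℂ)/2) *
        ∑ k, c k * (Real.exp (-(‖h k - h j‖^2) / (4*σ)) : ℂ) := by
  have hb : 0 < ((σ:ℂ)).re := by simpa using hσ
  have hptw : ∀ θ : EuclideanSpace ℝ (Fin d),
      (∑ k, c k * Complex.exp (Complex.I * ((⟪θ, h k⟫ : ℝ) : ℂ))) *
        Complex.exp (-Complex.I * ((⟪θ, h j⟫ : ℝ) : ℂ)) * (Real.exp (-σ * ‖θ‖^2) : ℂ)
      = ∑ k, c k * Complex.exp (-(σ:ℂ) * (‖θ‖:ℂ)^2 +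
          Complex.I * ((⟪h k - h j, θ⟫ : ℝ) : ℂ)) := by
    intro θ
    rw [Finset.sum_mul, Finset.sum_mul]
    refine Finset.sum_congr rfl fun k _ => ?_
    have hin : (⟪h k - h j, θ⟫ : ℝ) = ⟪θ, h k⟫ - ⟪θ, h j⟫ := by
      rw [inner_sub_left, real_inner_comm (h k), real_inner_comm (h j)]
    rw [show -(σ:ℂ) * (‖θ‖:ℂ)^2 + Complex.I * ((⟪h k - h j, θ⟫ : ℝ) : ℂ)
        = Complex.I * ((⟪θ, h k⟫ : ℝ) : ℂ) + (-Complex.I * ((⟪θ, h j⟫ : ℝ) : ℂ)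
            + ((-σ * ‖θ‖^2 : ℝ) : ℂ)) from by rw [hin]; push_cast; ring,
      Complex.exp_add, Complex.exp_add, ← Complex.ofReal_exp]
    ring
  rw [MeasureTheory.integral_congr_ae (Filter.Eventually.of_forall hptw)]
  rw [MeasureTheory.integral_finset_sum _ fun k _ =>
    ((GaussianFourier.integrable_cexp_neg_mul_sq_norm_add
      (V := EuclideanSpace ℝ (Fin d)) hb Complex.I (h k - h j)).const_mul (c k))]
  rw [Finset.mul_sum]
  refine Finset.sum_congr rfl fun k _ => ?_
  rw [MeasureTheory.integral_const_mul, gaussInt hσ]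
  ring


/-- The weighted derivative characteristic summary
`S(θ) = i ∑ₖ pₖ hₖ e^{i⟨θ,hₖ⟩}` (componentwise). -/
noncomputable def weightedSummary {d t : ℕ} (h : Fin t → EuclideanSpace ℝ (Fin d))
    (p : Fin t → ℝ) (θ : EuclideanSpace ℝ (Fin d)) : Fin d → ℂ :=
  fun l => Complex.I *
    ∑ k, (p k : ℂ) * (h k l : ℂ) * Complex.exp (Complex.I * (⟪θ, h k⟫ : ℝ))

/-- The spectral query `w_j(θ) = (i/(2π)^d) e^{i⟨θ,h_j⟩}`. -/
noncomputable def weightedQuery {d t : ℕ} (h : Fin t → EuclideanSpace ℝ (Fin d))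
    (j : Fin t) (θ : EuclideanSpace ℝ (Fin d)) : ℂ :=
  (Complex.I / ((2 * Real.pi) ^ d : ℝ)) *
    Complex.exp (Complex.I * (⟪θ, h j⟫ : ℝ))

/-- The empirical characteristic function `φ(θ) = ∑ₖ pₖ e^{i⟨θ,hₖ⟩}`. -/
noncomputable def empCharFun {d t : ℕ} (h : Fin t → EuclideanSpace ℝ (Fin d))
    (p : Fin t → ℝ) (θ : EuclideanSpace ℝ (Fin d)) : ℂ :=
  ∑ k, (p k : ℂ) * Complex.exp (Complex.I * (⟪θ, h k⟫ : ℝ))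

/-- The scalar spectral query `w̃_j(θ) = (1/(2π)^d) e^{i⟨θ,h_j⟩}`. -/
noncomputable def scalarQuery {d t : ℕ} (h : Fin t → EuclideanSpace ℝ (Fin d))
    (j : Fin t) (θ : EuclideanSpace ℝ (Fin d)) : ℂ :=
  ((1 : ℂ) / ((2 * Real.pi) ^ d : ℝ)) *
    Complex.exp (Complex.I * (⟪θ, h j⟫ : ℝ))

/-- **Ratio recovery of embeddings (Corollary 3, part 3, constructive form).**
For pairwise distinct `h₁, …, h_t ∈ ℝ^d` with weights `pₖ > 0` summing to `1`,
and every `j`, the ratio of the vector readout of `S` against `w_j` to the scalar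
readout of `φ` against `w̃_j` (both Gaussian-regularized) converges, as `σ → 0⁺`,
to the embedding `h_j`; in particular `h_j` (and, by the scalar readout, `p_j`)
is recoverable from the pair `(S, φ)`. -/
theorem ratio_recovery
    (d t : ℕ) (h : Fin t → EuclideanSpace ℝ (Fin d)) (hdist : Function.Injective h)
    (p : Fin t → ℝ) (hp : ∀ k, 0 < p k) (hsum : ∑ k, p k = 1) (j : Fin t) :
    Tendsto
      (fun σ : ℝ => fun l : Fin d =>
        (∫ θ : EuclideanSpace ℝ (Fin d),
            weightedSummary h p θ l * (starRingEnd ℂ) (weightedQuery h j θ) *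
              (Real.exp (-σ * ‖θ‖ ^ 2) : ℂ)) /
        (∫ θ : EuclideanSpace ℝ (Fin d),
            empCharFun h p θ * (starRingEnd ℂ) (scalarQuery h j θ) *
              (Real.exp (-σ * ‖θ‖ ^ 2) : ℂ)))
      (nhdsWithin 0 (Set.Ioi 0))
      (nhds (fun l : Fin d => (h j l : ℂ))) := by
  rw [tendsto_pi_nhds]
  intro l
  -- notation
  set G : Fin t → ℝ → ℝ := fun k σ => Real.exp (-(‖h k - h j‖^2) / (4*σ)) with hGdef
  -- limits of G
  have hG : ∀ k, Tendsto (fun σ => ((G k σ : ℝ) : ℂ)) (nhdsWithin 0 (Set.Ioi 0))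
      (nhds ((if k = j then 1 else 0 : ℝ) : ℂ)) := by
    intro k
    refine (Complex.continuous_ofReal.tendsto _).comp ?_
    by_cases hk : k = j
    · subst hk
      have hone : G k = fun _ => 1 := by funext σ; simp [hGdef, sub_self]
      rw [hone, if_pos rfl]
      exact tendsto_const_nhds
    · simp only [if_neg hk, hGdef]
      have hne : h k - h j ≠ 0 := sub_ne_zero.mpr (fun e => hk (hdist e))
      have hc : 0 < ‖h k - h j‖^2 := pow_pos (norm_pos_iff.mpr hne) 2
      have h1 : Tendsto (fun σ : ℝ => -(‖h k - h j‖^2) / (4*σ))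
          (nhdsWithin 0 (Set.Ioi 0)) atBot := by
        have : (fun σ : ℝ => -(‖h k - h j‖^2) / (4*σ))
            = fun σ : ℝ => (-(‖h k - h j‖^2) / 4) * σ⁻¹ := by
          funext σ; field_simp
        rw [this]
        exact Tendsto.const_mul_atTop_of_neg (by linarith) tendsto_inv_nhdsGT_zero
      exact Real.tendsto_exp_atBot.comp h1
  -- limits of the sums
  have hA : Tendsto (fun σ => ∑ k, ((p k : ℂ) * (h k l : ℂ)) * ((G k σ : ℝ) : ℂ))
      (nhdsWithin 0 (Set.Ioi 0)) (nhds ((p j : ℂ) * (h j l : ℂ))) := by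
    have := tendsto_finset_sum (Finset.univ : Finset (Fin t))
      (fun k _ => (tendsto_const_nhds (x := (p k : ℂ) * (h k l : ℂ))).mul (hG k))
    convert this using 2
    rw [Finset.sum_congr rfl (fun k _ => by
      rw [apply_ite (fun r : ℝ => ((p k : ℂ) * (h k l : ℂ)) * (r : ℂ))])]
    simp [Finset.sum_ite_eq']
  have hB : Tendsto (fun σ => ∑ k, ((p k : ℂ)) * ((G k σ : ℝ) : ℂ))
      (nhdsWithin 0 (Set.Ioi 0)) (nhds ((p j : ℂ))) := by
    have := tendsto_finset_sum (Finset.univ : Finset (Fin t))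
      (fun k _ => (tendsto_const_nhds (x := (p k : ℂ))).mul (hG k))
    convert this using 2
    rw [Finset.sum_congr rfl (fun k _ => by
      rw [apply_ite (fun r : ℝ => ((p k : ℂ)) * (r : ℂ))])]
    simp [Finset.sum_ite_eq']
  have hpj : (p j : ℂ) ≠ 0 := by
    exact_mod_cast (ne_of_gt (hp j))
  have hlim : Tendsto (fun σ : ℝ =>
      (∑ k, ((p k : ℂ) * (h k l : ℂ)) * ((G k σ : ℝ) : ℂ)) /
      (∑ k, ((p k : ℂ)) * ((G k σ : ℝ) : ℂ)))
      (nhdsWithin 0 (Set.Ioi 0)) (nhds ((h j l : ℂ))) := by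
    have := hA.div hB hpj
    rwa [mul_comm, mul_div_assoc, div_self hpj, mul_one] at this
  refine Tendsto.congr' ?_ hlim
  filter_upwards [self_mem_nhdsWithin] with σ hσ
  have hσ' : (0:ℝ) < σ := hσ
  -- numerator
  have hnum : (∫ θ : EuclideanSpace ℝ (Fin d),
      weightedSummary h p θ l * (starRingEnd ℂ) (weightedQuery h j θ) *
        (Real.exp (-σ * ‖θ‖ ^ 2) : ℂ))
      = ((1:ℂ)/((2 * Real.pi) ^ d : ℝ)) * (((π:ℂ)/(σ:ℂ)) ^ ((d:ℂ)/2) *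
          ∑ k, ((p k : ℂ) * (h k l : ℂ)) * ((G k σ : ℝ) : ℂ)) := by
    rw [← coreInt h j hσ' (fun k => (p k : ℂ) * (h k l : ℂ)),
      ← MeasureTheory.integral_const_mul]
    refine MeasureTheory.integral_congr_ae (Filter.Eventually.of_forall fun θ => ?_)
    simp only [weightedSummary, weightedQuery, map_mul, map_div₀, Complex.conj_I,
      Complex.conj_ofReal, ← Complex.exp_conj, neg_mul]
    ring_nf
    rw [Complex.I_sq]
    ring
  have hden : (∫ θ : EuclideanSpace ℝ (Fin d),
      empCharFun h p θ * (starRingEnd ℂ) (scalarQuery h j θ) *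
        (Real.exp (-σ * ‖θ‖ ^ 2) : ℂ))
      = ((1:ℂ)/((2 * Real.pi) ^ d : ℝ)) * (((π:ℂ)/(σ:ℂ)) ^ ((d:ℂ)/2) *
          ∑ k, ((p k : ℂ)) * ((G k σ : ℝ) : ℂ)) := by
    rw [← coreInt h j hσ' (fun k => (p k : ℂ)), ← MeasureTheory.integral_const_mul]
    refine MeasureTheory.integral_congr_ae (Filter.Eventually.of_forall fun θ => ?_)
    simp only [empCharFun, scalarQuery, map_mul, map_div₀, Complex.conj_I,
      Complex.conj_ofReal, ← Complex.exp_conj, neg_mul, map_one]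
    ring_nf
  rw [hnum, hden, ← mul_assoc, ← mul_assoc]
  have hK : ((1:ℂ)/((2 * Real.pi) ^ d : ℝ)) * ((π:ℂ)/(σ:ℂ)) ^ ((d:ℂ)/2) ≠ 0 := by
    apply mul_ne_zero
    · simp only [one_div, ne_eq, inv_eq_zero, Complex.ofReal_eq_zero]
      positivity
    · rw [ne_eq, Complex.cpow_eq_zero_iff]
      push_neg
      intro hz
      exact absurd hz (div_ne_zero (by exact_mod_cast Real.pi_ne_zero)
        (by exact_mod_cast ne_of_gt hσ'))
  rw [mul_div_mul_left _ _ hK]
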